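/- Every metric space X of countable asymptotic dimension is large scale paracompact: for every ε > 0 and every set S of cardinality bigger than card(X × ℕ) there exists an (ε,ε)-Lipschitz partition of unity g : X → Δ(S) that is cobounded and whose Lebesgue number is at least 1/ε. -/

import Mathlib

universe u

/-- The `l¹` distance between two (finitely supported) functions `S → ℝ`,
modeling the metric of `Δ(S) ⊆ l¹(S)`. -/
noncomputable def l1dist {S : Type*} (φ ψ : S → ℝ) : ℝ := ∑ᶠ v, |φ v - ψ v|

/-- `φ` is a point of `Δ(S)`. -/
def IsDelta {S : Type*} (φ : S → ℝ) : Prop :=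
  (∀ v, 0 ≤ φ v) ∧ (Function.support φ).Finite ∧ ∑ᶠ v, φ v = 1

/-- `f` is a partition of unity on `A` with values in `Δ(S)`. -/
def PartUnityOn {X S : Type*} (f : X → S → ℝ) (A : Set X) : Prop :=
  ∀ a ∈ A, IsDelta (f a)

/-- `f` is `(ε,ε)`-Lipschitz on `A` (with respect to the `l¹` metric on `Δ(S)`). -/
def LipschitzEpsOn {X S : Type*} [MetricSpace X] (ε : ℝ) (f : X → S → ℝ) (A : Set X) : Prop :=
  ∀ x ∈ A, ∀ y ∈ A, l1dist (f x) (f y) ≤ ε * dist x y + ε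

/-- `f` is `K`-cobounded on `A`. -/
def CoboundedOn {X S : Type*} [MetricSpace X] (K : ℝ) (f : X → S → ℝ) (A : Set X) : Prop :=
  ∀ v : S, EMetric.diam {x ∈ A | 0 < f x v} ≤ ENNReal.ofReal K

/-- A family of subsets is `R`-disjoint if distinct members are at distance `> R`. -/
def RDisjointFam {X : Type*} [MetricSpace X] (R : ℝ) (𝒲 : Set (Set X)) : Prop :=
  ∀ U ∈ 𝒲, ∀ V ∈ 𝒲, U ≠ V → ∀ x ∈ U, ∀ y ∈ V, R < dist x y

/-- `𝒰` is uniformly bounded. -/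
def UnifBounded {X : Type*} [MetricSpace X] (𝒰 : Set (Set X)) : Prop :=
  ∃ M : ℝ, 0 < M ∧ ∀ U ∈ 𝒰, EMetric.diam U ≤ ENNReal.ofReal M

/-- `U` can be expressed as a union of at most `k` families from `𝒱` that are
`R`-disjoint. -/
def UnionOfFams {X : Type*} [MetricSpace X] (k : ℕ) (R : ℝ) (𝒱 : Set (Set X))
    (U : Set X) : Prop :=
  ∃ 𝒲 : Fin k → Set (Set X), (∀ j, 𝒲 j ⊆ 𝒱 ∧ RDisjointFam R (𝒲 j)) ∧
    U = ⋃ j, ⋃₀ 𝒲 j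

/-- `X` is of countable asymptotic dimension (Definition 7.1). -/
def CountableAsdim (X : Type*) [MetricSpace X] : Prop :=
  ∃ nseq : ℕ → ℕ, (∀ i, 1 ≤ nseq i) ∧
    ∀ R : ℕ → ℝ, (∀ i, 0 < R i) →
      ∃ 𝒱 : ℕ → Set (Set X), 𝒱 1 = {Set.univ} ∧
        (∀ i, 1 ≤ i → ∀ U ∈ 𝒱 i, UnionOfFams (nseq i) (R i) (𝒱 (i + 1)) U) ∧
        ∃ m, 1 ≤ m ∧ UnifBounded (𝒱 m)

/-!
The partition of unity is built by downward induction along the levels of the decomposition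
witnessing countable asymptotic dimension, on thickenings of the sets of each level, with
vertices in `X × ℕ` located over points of those sets. On a uniformly bounded level a single
vertex per set will do. An `R`-disjoint union inherits a partition from its members: for `R`
large compared with the thickenings these do not meet, and points of different members are so
far apart that the `l¹`-distance of their images, at most `2`, is absorbed by the Lipschitz
constant. A union of `n` such unions is covered by averaging their partitions with the
normalised bump functions `max 0 (r - d(x, A_j))`, which costs `2 n / gap` in the Lipschitz
constant, `gap` being the difference between the two thickening radii. Geometrically growing
gaps keep the total cost below `ε / 2`. Finally the vertex set `X × ℕ` embeds into `S`.
-/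

open Metric

section L1

variable {V W : Type*}

lemma Finsupp.finsum_eq_sum_of_support_subset {φ : V →₀ ℝ} {s : Finset V} (h : φ.support ⊆ s) :
    ∑ᶠ v, φ v = ∑ v ∈ s, φ v :=
  _root_.finsum_eq_sum_of_support_subset _ (by rw [Finsupp.fun_support_eq]; exact_mod_cast h)

lemma l1dist_eq_sum {φ ψ : V →₀ ℝ} {s : Finset V} (hφ : φ.support ⊆ s) (hψ : ψ.support ⊆ s) :
    l1dist ⇑φ ⇑ψ = ∑ v ∈ s, |φ v - ψ v| := by
  refine finsum_eq_sum_of_support_subset _ fun v hv => ?_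
  by_contra hvs
  have hφv : φ v = 0 := Finsupp.notMem_support_iff.1 fun h => hvs (hφ h)
  have hψv : ψ v = 0 := Finsupp.notMem_support_iff.1 fun h => hvs (hψ h)
  simp [hφv, hψv] at hv

lemma isDelta_finsupp_iff {φ : V →₀ ℝ} : IsDelta ⇑φ ↔ (∀ v, 0 ≤ φ v) ∧ ∑ᶠ v, φ v = 1 := by
  simp [IsDelta]

lemma l1dist_le_two {φ ψ : V →₀ ℝ} (hφ : IsDelta ⇑φ) (hψ : IsDelta ⇑ψ) :
    l1dist ⇑φ ⇑ψ ≤ 2 := by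
  classical
  have hφs : ∑ᶠ v, φ v = ∑ v ∈ φ.support ∪ ψ.support, φ v :=
    Finsupp.finsum_eq_sum_of_support_subset Finset.subset_union_left
  have hψs : ∑ᶠ v, ψ v = ∑ v ∈ φ.support ∪ ψ.support, ψ v :=
    Finsupp.finsum_eq_sum_of_support_subset Finset.subset_union_right
  rw [l1dist_eq_sum Finset.subset_union_left Finset.subset_union_right, ← one_add_one_eq_two]
  nth_rw 1 [← hφ.2.2, ← hψ.2.2]
  rw [hφs, hψs, ← Finset.sum_add_distrib]
  exact Finset.sum_le_sum fun v _ =>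
    (abs_sub _ _).trans (by rw [abs_of_nonneg (hφ.1 v), abs_of_nonneg (hψ.1 v)])

lemma l1dist_sum_le {ι : Type*} (s : Finset ι) (φ ψ : ι → V →₀ ℝ) :
    l1dist ⇑(∑ j ∈ s, φ j) ⇑(∑ j ∈ s, ψ j) ≤ ∑ j ∈ s, l1dist ⇑(φ j) ⇑(ψ j) := by
  classical
  set T := s.biUnion fun j => (φ j).support ∪ (ψ j).support
  have hT : ∀ j ∈ s, (φ j).support ⊆ T ∧ (ψ j).support ⊆ T := fun j hj =>
    ⟨fun v hv => Finset.mem_biUnion.2 ⟨j, hj, Finset.mem_union_left _ hv⟩,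
      fun v hv => Finset.mem_biUnion.2 ⟨j, hj, Finset.mem_union_right _ hv⟩⟩
  have hsum : ∀ χ : ι → V →₀ ℝ, (∀ j ∈ s, (χ j).support ⊆ T) → (∑ j ∈ s, χ j).support ⊆ T :=
    fun χ hχ => Finsupp.support_finsetSum.trans (Finset.biUnion_subset.2 hχ)
  rw [l1dist_eq_sum (hsum φ fun j hj => (hT j hj).1) (hsum ψ fun j hj => (hT j hj).2),
    Finset.sum_congr rfl fun j hj => l1dist_eq_sum (hT j hj).1 (hT j hj).2, Finset.sum_comm]
  refine Finset.sum_le_sum fun v _ => ?_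
  simp only [Finsupp.finsetSum_apply, ← Finset.sum_sub_distrib]
  exact Finset.abs_sum_le_sum_abs _ _

lemma l1dist_smul_smul_le {φ ψ : V →₀ ℝ} {a b D : ℝ} (ha : 0 ≤ a) (hb : 0 ≤ b)
    (hφ : a ≠ 0 → IsDelta ⇑φ) (hψ : b ≠ 0 → IsDelta ⇑ψ) (hD : 0 ≤ D)
    (hφψ : a ≠ 0 → b ≠ 0 → l1dist ⇑φ ⇑ψ ≤ D) :
    l1dist ⇑(a • φ) ⇑(b • ψ) ≤ |a - b| + b * D := by
  classical
  set s := φ.support ∪ ψ.support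
  have hφs : ∑ᶠ v, φ v = ∑ v ∈ s, φ v :=
    Finsupp.finsum_eq_sum_of_support_subset Finset.subset_union_left
  have hψs : ∑ᶠ v, ψ v = ∑ v ∈ s, ψ v :=
    Finsupp.finsum_eq_sum_of_support_subset Finset.subset_union_right
  rw [l1dist_eq_sum (Finsupp.support_smul.trans Finset.subset_union_left)
    (Finsupp.support_smul.trans Finset.subset_union_right)]
  simp only [Finsupp.smul_apply, smul_eq_mul]
  rcases eq_or_ne a 0 with rfl | ha0
  · rcases eq_or_ne b 0 with rfl | hb0
    · simp
    have hψ := hψ hb0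
    calc ∑ v ∈ s, |0 * φ v - b * ψ v| = b * ∑ v ∈ s, ψ v := by
          rw [Finset.mul_sum]
          exact Finset.sum_congr rfl fun v _ => by
            rw [zero_mul, zero_sub, abs_neg, abs_mul, abs_of_nonneg hb, abs_of_nonneg (hψ.1 v)]
      _ ≤ |0 - b| + b * D := by
          rw [← hψs, hψ.2.2, zero_sub, abs_neg, abs_of_nonneg hb, mul_one]
          exact le_add_of_nonneg_right (mul_nonneg hb hD)
  have hφ := hφ ha0
  have hbD : b * l1dist ⇑φ ⇑ψ ≤ b * D := by
    rcases eq_or_ne b 0 with rfl | hb0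
    · simp
    · exact mul_le_mul_of_nonneg_left (hφψ ha0 hb0) hb
  calc ∑ v ∈ s, |a * φ v - b * ψ v| ≤ ∑ v ∈ s, (|a - b| * φ v + b * |φ v - ψ v|) := by
        refine Finset.sum_le_sum fun v _ => ?_
        calc |a * φ v - b * ψ v| = |(a - b) * φ v + b * (φ v - ψ v)| := by ring_nf
          _ ≤ |a - b| * φ v + b * |φ v - ψ v| := by
            refine (abs_add_le _ _).trans_eq ?_
            rw [abs_mul, abs_mul, abs_of_nonneg (hφ.1 v), abs_of_nonneg hb]
    _ = |a - b| + b * l1dist ⇑φ ⇑ψ := by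
        rw [Finset.sum_add_distrib, ← Finset.mul_sum, ← Finset.mul_sum, ← hφs, hφ.2.2, mul_one,
          l1dist_eq_sum Finset.subset_union_left Finset.subset_union_right]
    _ ≤ |a - b| + b * D := by linarith

lemma finsum_embDomain (f : V ↪ W) (φ : V →₀ ℝ) : ∑ᶠ w, φ.embDomain f w = ∑ᶠ v, φ v := by
  rw [Finsupp.finsum_eq_sum_of_support_subset subset_rfl,
    Finsupp.finsum_eq_sum_of_support_subset subset_rfl, Finsupp.support_embDomain, Finset.sum_map]
  simp only [Finsupp.embDomain_apply_self]

lemma l1dist_embDomain (f : V ↪ W) (φ ψ : V →₀ ℝ) :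
    l1dist ⇑(φ.embDomain f) ⇑(ψ.embDomain f) = l1dist ⇑φ ⇑ψ := by
  classical
  rw [l1dist_eq_sum (s := (φ.support ∪ ψ.support).map f)
      (by simp [Finsupp.support_embDomain]) (by simp [Finsupp.support_embDomain]),
    Finset.sum_map, l1dist_eq_sum Finset.subset_union_left Finset.subset_union_right]
  simp only [Finsupp.embDomain_apply_self]

lemma IsDelta.embDomain (f : V ↪ W) {φ : V →₀ ℝ} (h : IsDelta ⇑φ) :
    IsDelta ⇑(φ.embDomain f) := by
  rw [isDelta_finsupp_iff] at h ⊢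
  refine ⟨fun w => ?_, by rw [finsum_embDomain, h.2]⟩
  rw [Finsupp.embDomain_apply]
  split_ifs
  exacts [h.1 _, le_rfl]

lemma isDelta_single (v : V) : IsDelta ⇑(Finsupp.single v (1 : ℝ)) := by
  classical
  rw [isDelta_finsupp_iff, Finsupp.finsum_eq_sum_of_support_subset Finsupp.support_single_subset,
    Finset.sum_singleton, Finsupp.single_eq_same]
  exact ⟨fun w => by rw [Finsupp.single_apply]; split_ifs <;> norm_num, rfl⟩

end L1

lemma sum_abs_div_sum_sub_div_sum_le {ι : Type*} [Fintype ι] {u w : ι → ℝ} (hw : ∀ j, 0 ≤ w j)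
    (hu : 0 < ∑ j, u j) (hw' : 0 < ∑ j, w j) :
    ∑ j, |u j / ∑ i, u i - w j / ∑ i, w i| ≤ 2 * (∑ j, |u j - w j|) / ∑ j, u j := by
  set U := ∑ j, u j
  set W := ∑ j, w j
  have hWU : |W - U| ≤ ∑ j, |u j - w j| := by
    rw [abs_sub_comm, ← Finset.sum_sub_distrib]
    exact Finset.abs_sum_le_sum_abs _ _
  calc ∑ j, |u j / U - w j / W| ≤ ∑ j, (|u j - w j| / U + w j * |W - U| / (U * W)) := by
        refine Finset.sum_le_sum fun j _ => ?_
        have hsplit : u j / U - w j / W = (u j - w j) / U + w j * (W - U) / (U * W) := by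
          field_simp
          ring
        rw [hsplit]
        refine (abs_add_le _ _).trans_eq ?_
        rw [abs_div, abs_div, abs_mul, abs_of_pos hu, abs_of_pos (mul_pos hu hw'),
          abs_of_nonneg (hw j)]
    _ = (∑ j, |u j - w j|) / U + |W - U| / U := by
        rw [Finset.sum_add_distrib, ← Finset.sum_div, ← Finset.sum_div, ← Finset.sum_mul,
          show ∑ j, w j = W from rfl]
        field_simp
    _ ≤ 2 * (∑ j, |u j - w j|) / U := by
        rw [mul_div_assoc, two_mul]
        gcongr

section Glue

variable {α : Type*}

def tag (j : ℕ) : α × ℕ ↪ α × ℕ :=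
  ⟨fun v => (v.1, Nat.pair j v.2), fun v w h => by
    simp only [Prod.mk.injEq, Nat.pair_eq_pair] at h
    exact Prod.ext h.1 h.2.2⟩

lemma eq_of_tag_eq_tag {i j : ℕ} {v w : α × ℕ} (h : tag i v = tag j w) : i = j :=
  (Nat.pair_eq_pair.1 (Prod.mk.inj h).2).1

noncomputable def glued {k : ℕ} (c : Fin k → ℝ) (G : Fin k → α × ℕ →₀ ℝ) : α × ℕ →₀ ℝ :=
  ∑ j, (c j • G j).embDomain (tag j)

variable {k : ℕ} {c : Fin k → ℝ} {G : Fin k → α × ℕ →₀ ℝ}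

lemma glued_apply_tag (j : Fin k) (w : α × ℕ) : glued c G (tag j w) = c j * G j w := by
  rw [glued, Finsupp.finsetSum_apply, Finset.sum_eq_single j]
  · simp
  · intro i _ hij
    refine Finsupp.embDomain_of_notMem_range _ _ _ fun ⟨w', hw'⟩ => hij ?_
    exact Fin.ext (eq_of_tag_eq_tag hw')
  · simp

lemma glued_apply_of_forall_tag_ne {v : α × ℕ} (hv : ∀ (j : Fin k) w, tag j w ≠ v) :
    glued c G v = 0 := by
  rw [glued, Finsupp.finsetSum_apply]
  exact Finset.sum_eq_zero fun j _ =>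
    Finsupp.embDomain_of_notMem_range _ _ _ fun ⟨w, hw⟩ => hv j w hw

lemma exists_tag_of_glued_pos {v : α × ℕ} (h : 0 < glued c G v) :
    ∃ (j : Fin k) (w : α × ℕ), tag j w = v ∧ 0 < c j * G j w := by
  by_cases hv : ∃ (j : Fin k) (w : α × ℕ), tag j w = v
  · obtain ⟨j, w, rfl⟩ := hv
    exact ⟨j, w, rfl, glued_apply_tag (c := c) (G := G) j w ▸ h⟩
  push Not at hv
  exact absurd (glued_apply_of_forall_tag_ne hv) h.ne'

lemma finsum_glued : ∑ᶠ v, glued c G v = ∑ j, c j * ∑ᶠ v, G j v := by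
  simp only [glued, Finsupp.finsetSum_apply]
  rw [finsum_sum_comm _ _ fun j _ => Finsupp.hasFiniteSupport _]
  refine Finset.sum_congr rfl fun j _ => ?_
  rw [finsum_embDomain, mul_finsum]
  rfl

lemma isDelta_glued (hc : ∀ j, 0 ≤ c j) (hsum : ∑ j, c j = 1)
    (hG : ∀ j, c j ≠ 0 → IsDelta ⇑(G j)) : IsDelta ⇑(glued c G) := by
  rw [isDelta_finsupp_iff, finsum_glued]
  constructor
  · intro v
    by_cases hv : ∃ (j : Fin k) (w : α × ℕ), tag j w = v
    · obtain ⟨j, w, rfl⟩ := hv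
      rw [glued_apply_tag]
      rcases eq_or_ne (c j) 0 with h0 | h0
      · simp [h0]
      · exact mul_nonneg (hc j) ((hG j h0).1 w)
    · push Not at hv
      rw [glued_apply_of_forall_tag_ne hv]
  · rw [← hsum]
    refine Finset.sum_congr rfl fun j _ => ?_
    rcases eq_or_ne (c j) 0 with h0 | h0
    · simp [h0]
    · rw [(hG j h0).2.2, mul_one]

lemma l1dist_glued_le (c' : Fin k → ℝ) (G' : Fin k → α × ℕ →₀ ℝ) :
    l1dist ⇑(glued c G) ⇑(glued c' G') ≤ ∑ j, l1dist ⇑(c j • G j) ⇑(c' j • G' j) :=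
  (l1dist_sum_le _ _ _).trans_eq (by simp only [l1dist_embDomain])

end Glue

section Bump

variable {X : Type*} [MetricSpace X]

open Classical in
/-- The case split is needed because `infDist x ∅ = 0`. -/
noncomputable def bump (r : ℝ) (A : Set X) (x : X) : ℝ :=
  if A.Nonempty then max 0 (r - infDist x A) else 0

lemma bump_nonneg (r : ℝ) (A : Set X) (x : X) : 0 ≤ bump r A x := by
  unfold bump
  split_ifs
  exacts [le_max_left _ _, le_rfl]

lemma abs_bump_sub_bump_le (r : ℝ) (A : Set X) (x y : X) :
    |bump r A x - bump r A y| ≤ dist x y := by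
  unfold bump
  split_ifs
  · have h := (lipschitz_infDist_pt A).dist_le_mul x y
    rw [Real.dist_eq, NNReal.coe_one, one_mul] at h
    rw [max_comm 0, max_comm 0]
    refine (abs_max_sub_max_le_abs _ _ _).trans ?_
    rwa [sub_sub_sub_cancel_left, abs_sub_comm]
  · simp

lemma bump_pos_iff {r : ℝ} {A : Set X} {x : X} : 0 < bump r A x ↔ x ∈ thickening r A := by
  unfold bump
  split_ifs with hA
  · rw [lt_max_iff, mem_thickening_iff_infDist_lt hA]
    constructor
    · rintro (h | h) <;> linarith
    · intro h; right; linarith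
  · simp [Set.not_nonempty_iff_eq_empty.1 hA]

lemma sub_lt_bump {r s : ℝ} {A : Set X} {x : X} (hx : x ∈ thickening s A) :
    r - s < bump r A x := by
  have hA : A.Nonempty := by
    by_contra hA
    simp [Set.not_nonempty_iff_eq_empty.1 hA] at hx
  rw [bump, if_pos hA]
  exact lt_max_of_lt_right (by linarith [(mem_thickening_iff_infDist_lt hA).1 hx])

variable {k : ℕ} {A : Fin k → Set X} {r s : ℝ} {x y : X}

noncomputable def bumpWeight (r : ℝ) (A : Fin k → Set X) (j : Fin k) (x : X) : ℝ :=
  bump r (A j) x / ∑ i, bump r (A i) x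

lemma sub_lt_sum_bump (hx : x ∈ thickening s (⋃ j, A j)) : r - s < ∑ i, bump r (A i) x := by
  rw [thickening_iUnion, Set.mem_iUnion] at hx
  obtain ⟨j, hj⟩ := hx
  exact (sub_lt_bump hj).trans_le
    (Finset.single_le_sum (fun i _ => bump_nonneg r (A i) x) (Finset.mem_univ j))

lemma bumpWeight_nonneg (j : Fin k) : 0 ≤ bumpWeight r A j x :=
  div_nonneg (bump_nonneg _ _ _) (Finset.sum_nonneg fun _ _ => bump_nonneg _ _ _)

lemma sum_bumpWeight (h : 0 < ∑ i, bump r (A i) x) : ∑ j, bumpWeight r A j x = 1 := by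
  simp only [bumpWeight]
  rw [← Finset.sum_div, div_self h.ne']

lemma mem_thickening_of_bumpWeight_ne_zero {j : Fin k} (h : bumpWeight r A j x ≠ 0) :
    x ∈ thickening r (A j) :=
  bump_pos_iff.1 ((bump_nonneg _ _ _).lt_of_ne' (left_ne_zero_of_mul h))

lemma bumpWeight_pos {j : Fin k} (hx : x ∈ thickening r (A j)) (h : 0 < ∑ i, bump r (A i) x) :
    0 < bumpWeight r A j x :=
  div_pos (bump_pos_iff.2 hx) h

lemma sum_abs_bumpWeight_sub_le (hsr : s < r) (hx : x ∈ thickening s (⋃ j, A j))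
    (hy : y ∈ thickening s (⋃ j, A j)) :
    ∑ j, |bumpWeight r A j x - bumpWeight r A j y| ≤ 2 * k * dist x y / (r - s) := by
  have hx' := sub_lt_sum_bump (r := r) hx
  have hy' := sub_lt_sum_bump (r := r) hy
  refine (sum_abs_div_sum_sub_div_sum_le (fun j => bump_nonneg r (A j) y) (by linarith)
    (by linarith)).trans ?_
  have hvar : ∑ j, |bump r (A j) x - bump r (A j) y| ≤ k * dist x y := by
    simpa using Finset.sum_le_sum fun j (_ : j ∈ Finset.univ) => abs_bump_sub_bump_le r (A j) x y
  rw [mul_assoc]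
  gcongr

noncomputable def bumpGlued {α : Type*} (r : ℝ) (A : Fin k → Set X) (G : Fin k → X → α × ℕ →₀ ℝ)
    (x : X) : α × ℕ →₀ ℝ :=
  glued (fun j => bumpWeight r A j x) (fun j => G j x)

lemma bumpGlued_apply_tag {α : Type*} (G : Fin k → X → α × ℕ →₀ ℝ) (j : Fin k) (w : α × ℕ) :
    bumpGlued r A G x (tag j w) = bumpWeight r A j x * G j x w :=
  glued_apply_tag j w

lemma l1dist_bumpGlued_le {α : Type*} {G : Fin k → X → α × ℕ →₀ ℝ} {lam : ℝ} (hsr : s < r)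
    (hlam : 0 ≤ lam) (hG : ∀ j, PartUnityOn (fun x => ⇑(G j x)) (thickening r (A j)))
    (hGlip : ∀ j, LipschitzEpsOn lam (fun x => ⇑(G j x)) (thickening r (A j)))
    (hx : x ∈ thickening s (⋃ j, A j)) (hy : y ∈ thickening s (⋃ j, A j)) :
    l1dist ⇑(bumpGlued r A G x) ⇑(bumpGlued r A G y) ≤
      (lam + 2 * k / (r - s)) * dist x y + (lam + 2 * k / (r - s)) := by
  have hblock : ∀ j, l1dist ⇑(bumpWeight r A j x • G j x) ⇑(bumpWeight r A j y • G j y) ≤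
      |bumpWeight r A j x - bumpWeight r A j y| + bumpWeight r A j y * (lam * dist x y + lam) :=
    fun j => l1dist_smul_smul_le (bumpWeight_nonneg j) (bumpWeight_nonneg j)
      (fun hj => hG j x (mem_thickening_of_bumpWeight_ne_zero hj))
      (fun hj => hG j y (mem_thickening_of_bumpWeight_ne_zero hj)) (by positivity)
      (fun hjx hjy => hGlip j x (mem_thickening_of_bumpWeight_ne_zero hjx) y
        (mem_thickening_of_bumpWeight_ne_zero hjy))
  have hgap : 0 ≤ 2 * k / (r - s) := div_nonneg (by positivity) (sub_pos.2 hsr).le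
  calc _ ≤ ∑ j, l1dist ⇑(bumpWeight r A j x • G j x) ⇑(bumpWeight r A j y • G j y) :=
        l1dist_glued_le _ _
    _ ≤ ∑ j, (|bumpWeight r A j x - bumpWeight r A j y| +
          bumpWeight r A j y * (lam * dist x y + lam)) := Finset.sum_le_sum fun j _ => hblock j
    _ = ∑ j, |bumpWeight r A j x - bumpWeight r A j y| + (lam * dist x y + lam) := by
        rw [Finset.sum_add_distrib, ← Finset.sum_mul,
          sum_bumpWeight ((sub_pos.2 hsr).trans (sub_lt_sum_bump hy)), one_mul]
    _ ≤ 2 * k / (r - s) * dist x y + (lam * dist x y + lam) :=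
        add_le_add_left ((sum_abs_bumpWeight_sub_le hsr hx hy).trans_eq (by ring)) _
    _ ≤ (lam + 2 * k / (r - s)) * dist x y + (lam + 2 * k / (r - s)) := by linarith

end Bump

lemma pos_of_mem_thickening {X : Type*} [MetricSpace X] {δ : ℝ} {A : Set X} {x : X}
    (hx : x ∈ thickening δ A) : 0 < δ := by
  by_contra! hδ
  simp [thickening_of_nonpos hδ] at hx

section Partitions

variable {X V : Type*} [MetricSpace X]

structure IsPartitionNear (g : X → V →₀ ℝ) (δ lam L K : ℝ) (A : Set X) : Prop where
  partUnity : PartUnityOn (fun x => ⇑(g x)) (thickening δ A)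
  lipschitz : LipschitzEpsOn lam (fun x => ⇑(g x)) (thickening δ A)
  cobounded : CoboundedOn K (fun x => ⇑(g x)) (thickening δ A)
  lebesgue : ∀ x ∈ A, ∃ v, ∀ y ∈ thickening δ A, dist x y < L → 0 < g y v

lemma IsPartitionNear.embDomain {W : Type*} (f : V ↪ W) {g : X → V →₀ ℝ} {δ lam L K : ℝ}
    {A : Set X} (h : IsPartitionNear g δ lam L K A) :
    IsPartitionNear (fun x => (g x).embDomain f) δ lam L K A where
  partUnity x hx := (h.partUnity x hx).embDomain f
  lipschitz x hx y hy := (l1dist_embDomain f _ _).trans_le (h.lipschitz x hx y hy)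
  cobounded w := by
    by_cases hw : w ∈ Set.range f
    · obtain ⟨v, rfl⟩ := hw
      simpa only [Finsupp.embDomain_apply_self] using h.cobounded v
    · refine (ediam_mono fun x hx => ?_).trans (ediam_empty.trans_le zero_le)
      simp [Finsupp.embDomain_of_notMem_range _ _ _ hw] at hx
  lebesgue x hx := by
    obtain ⟨v, hv⟩ := h.lebesgue x hx
    exact ⟨f v, by simpa only [Finsupp.embDomain_apply_self] using hv⟩

/-- Locating every vertex `(a, n)` over a point `a ∈ A` is what keeps the stars of partitions
of far-apart sets apart when they are combined. -/
def AdmitsPartition (δ lam L K : ℝ) (A : Set X) : Prop :=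
  ∃ g : X → X × ℕ →₀ ℝ, IsPartitionNear g δ lam L K A ∧
    ∀ x ∈ thickening δ A, ∀ v, 0 < g x v → v.1 ∈ A

lemma admitsPartition_of_ediam_le {A : Set X} {δ lam L M : ℝ} (hδ : 0 ≤ δ) (hlam : 0 ≤ lam)
    (hM : 0 ≤ M) (hA : ediam A ≤ ENNReal.ofReal M) : AdmitsPartition δ lam L (M + 2 * δ) A := by
  rcases A.eq_empty_or_nonempty with rfl | ⟨p, hp⟩
  · exact ⟨0, ⟨by simp [PartUnityOn], by simp [LipschitzEpsOn], fun _ =>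
      (ediam_mono fun x hx => by simp at hx).trans (ediam_empty.trans_le zero_le), by simp⟩,
      by simp⟩
  have hdiam : ediam (thickening δ A) ≤ ENNReal.ofReal (M + 2 * δ) := by
    calc ediam (thickening δ A) ≤ ediam A + 2 * ENNReal.ofReal δ :=
          ediam_thickening_le (s := A) δ.toNNReal |>.trans_eq' (by rw [Real.coe_toNNReal _ hδ])
      _ ≤ ENNReal.ofReal (M + 2 * δ) := by
          rw [ENNReal.ofReal_add hM (by positivity), ENNReal.ofReal_mul zero_le_two,
            ENNReal.ofReal_ofNat]
          gcongr
  refine ⟨fun _ => Finsupp.single (p, 0) 1, ⟨fun _ _ => isDelta_single _, fun x _ y _ => ?_,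
    fun v => (ediam_mono fun x hx => hx.1).trans hdiam,
    fun _ _ => ⟨(p, 0), fun _ _ _ => by simp⟩⟩, fun _ _ v hv => ?_⟩
  · simp only [l1dist, sub_self, abs_zero, finsum_zero]
    positivity
  · classical
    rw [Finsupp.single_apply] at hv
    split_ifs at hv with hpv
    exacts [hpv ▸ hp, (lt_irrefl 0 hv).elim]

lemma RDisjointFam.eq_of_mem_thickening {R δ : ℝ} {𝒲 : Set (Set X)} (h : RDisjointFam R 𝒲)
    {U U' : Set X} (hU : U ∈ 𝒲) (hU' : U' ∈ 𝒲) {x y : X} (hx : x ∈ thickening δ U)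
    (hy : y ∈ thickening δ U') (hxy : dist x y ≤ R - 2 * δ) : U = U' := by
  by_contra hne
  obtain ⟨u, hu, hxu⟩ := mem_thickening_iff.1 hx
  obtain ⟨u', hu', hyu'⟩ := mem_thickening_iff.1 hy
  have := h U hU U' hU' hne u hu u' hu'
  have := dist_triangle4 u x y u'
  rw [dist_comm] at hxu
  linarith

lemma RDisjointFam.exists_eq_on_thickening {R δ : ℝ} {𝒲 : Set (Set X)} (h : RDisjointFam R 𝒲)
    (hδR : 2 * δ ≤ R) (G : Set X → X → V →₀ ℝ) :
    ∃ g : X → V →₀ ℝ, ∀ U ∈ 𝒲, ∀ x ∈ thickening δ U, g x = G U x := by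
  classical
  refine ⟨fun x => if hx : ∃ U ∈ 𝒲, x ∈ thickening δ U then G hx.choose x else 0,
    fun U hU x hx => ?_⟩
  have hex : ∃ U ∈ 𝒲, x ∈ thickening δ U := ⟨U, hU, hx⟩
  dsimp only
  rw [dif_pos hex, h.eq_of_mem_thickening hex.choose_spec.1 hU hex.choose_spec.2 hx
    (by rw [dist_self]; linarith)]

lemma exists_mem_thickening_of_mem_thickening_sUnion {δ : ℝ} {𝒲 : Set (Set X)} {x : X}
    (hx : x ∈ thickening δ (⋃₀ 𝒲)) : ∃ U ∈ 𝒲, x ∈ thickening δ U := by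
  obtain ⟨z, ⟨U, hU, hzU⟩, hxz⟩ := mem_thickening_iff.1 hx
  exact ⟨U, hU, mem_thickening_iff.2 ⟨z, hzU, hxz⟩⟩

lemma AdmitsPartition.sUnion {𝒲 : Set (Set X)} {R δ lam L K : ℝ} (hdisj : RDisjointFam R 𝒲)
    (hlam : 0 ≤ lam) (hsep : 2 ≤ lam * (R - 2 * δ)) (hL : L ≤ R - 2 * δ)
    (h : ∀ U ∈ 𝒲, AdmitsPartition δ lam L K U) : AdmitsPartition δ lam L K (⋃₀ 𝒲) := by
  choose! G hG hloc using h
  have hRδ : 0 < R - 2 * δ := by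
    by_contra! hneg
    nlinarith
  obtain ⟨g, hg⟩ := hdisj.exists_eq_on_thickening (δ := δ) (by linarith) G
  have hcomp : ∀ x ∈ thickening δ (⋃₀ 𝒲), ∃ U ∈ 𝒲, x ∈ thickening δ U ∧ g x = G U x :=
    fun x hx =>
      let ⟨U, hU, hxU⟩ := exists_mem_thickening_of_mem_thickening_sUnion hx
      ⟨U, hU, hxU, hg U hU x hxU⟩
  refine ⟨g, ⟨fun x hx => ?_, fun x hx y hy => ?_, fun v => ?_, ?_⟩, fun x hx v hv => ?_⟩
  · obtain ⟨U, hU, hxU, hgx⟩ := hcomp x hx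
    simpa only [hgx] using (hG U hU).partUnity x hxU
  · obtain ⟨U, hU, hxU, hgx⟩ := hcomp x hx
    obtain ⟨U', hU', hyU', hgy⟩ := hcomp y hy
    show l1dist ⇑(g x) ⇑(g y) ≤ _
    rw [hgx, hgy]
    by_cases hUU' : U = U'
    · subst hUU'
      exact (hG U hU).lipschitz x hxU y hyU'
    · have hfar : R - 2 * δ < dist x y :=
        not_le.1 fun hxy => hUU' (hdisj.eq_of_mem_thickening hU hU' hxU hyU' hxy)
      have h2 := l1dist_le_two ((hG U hU).partUnity x hxU) ((hG U' hU').partUnity y hyU')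
      nlinarith
  · set star := {x | x ∈ thickening δ (⋃₀ 𝒲) ∧ 0 < g x v}
    rcases star.eq_empty_or_nonempty with hempty | ⟨x₀, hx₀, hx₀v⟩
    · exact (ediam_mono hempty.subset).trans (ediam_empty.trans_le zero_le)
    obtain ⟨U₀, hU₀, hx₀U₀, hgx₀⟩ := hcomp x₀ hx₀
    rw [hgx₀] at hx₀v
    refine (ediam_mono ?_).trans ((hG U₀ hU₀).cobounded v)
    rintro x ⟨hx, hxv⟩
    obtain ⟨U, hU, hxU, hgx⟩ := hcomp x hx
    rw [hgx] at hxv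
    obtain rfl : U = U₀ := by
      by_contra hne
      have := hdisj U hU U₀ hU₀ hne _ (hloc U hU x hxU v hxv) _ (hloc U₀ hU₀ x₀ hx₀U₀ v hx₀v)
      linarith [dist_self v.1, pos_of_mem_thickening hxU]
    exact ⟨hxU, hxv⟩
  · rintro x ⟨U, hU, hxU⟩
    obtain ⟨v, hv⟩ := (hG U hU).lebesgue x hxU
    refine ⟨v, fun y hy hxy => ?_⟩
    obtain ⟨U', hU', hyU', hgy⟩ := hcomp y hy
    obtain rfl : U = U' := hdisj.eq_of_mem_thickening hU hU'
      (self_subset_thickening (pos_of_mem_thickening hyU') U hxU) hyU' (by linarith)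
    exact hgy ▸ hv y hyU' hxy
  · obtain ⟨U, hU, hxU, hgx⟩ := hcomp x hx
    exact ⟨U, hU, hloc U hU x hxU v (hgx ▸ hv)⟩

lemma AdmitsPartition.iUnion {k : ℕ} {A : Fin k → Set X} {δ δ' lam lam' L K : ℝ} (hδ : δ < δ')
    (hL : L ≤ δ') (hlam : 0 ≤ lam) (hlam' : lam + 2 * k / (δ' - δ) ≤ lam')
    (h : ∀ j, AdmitsPartition δ' lam L K (A j)) : AdmitsPartition δ lam' L K (⋃ j, A j) := by
  choose G hG hloc using h
  have htot : ∀ x ∈ thickening δ (⋃ j, A j), 0 < ∑ i, bump δ' (A i) x := fun x hx =>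
    (sub_lt_sum_bump hx).trans' (by linarith)
  have hsupp : ∀ x j w, 0 < bumpWeight δ' A j x * G j x w →
      x ∈ thickening δ' (A j) ∧ 0 < G j x w := fun x j w h =>
    ⟨mem_thickening_of_bumpWeight_ne_zero (left_ne_zero_of_mul h.ne'),
      pos_of_mul_pos_right h (bumpWeight_nonneg j)⟩
  refine ⟨bumpGlued δ' A G,
    ⟨fun x hx => ?_, fun x hx y hy => ?_, fun v => ?_, ?_⟩, fun x hx v hv => ?_⟩
  · exact isDelta_glued (fun j => bumpWeight_nonneg j) (sum_bumpWeight (htot x hx)) fun j hj =>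
      (hG j).partUnity x (mem_thickening_of_bumpWeight_ne_zero hj)
  · refine (l1dist_bumpGlued_le hδ hlam (fun j => (hG j).partUnity) (fun j => (hG j).lipschitz)
      hx hy).trans ?_
    have hgap : 0 ≤ 2 * k / (δ' - δ) := div_nonneg (by positivity) (sub_pos.2 hδ).le
    nlinarith [dist_nonneg (x := x) (y := y)]
  · set star := {x | x ∈ thickening δ (⋃ j, A j) ∧ 0 < bumpGlued δ' A G x v}
    rcases star.eq_empty_or_nonempty with hempty | ⟨x₀, -, hx₀v⟩
    · exact (ediam_mono hempty.subset).trans (ediam_empty.trans_le zero_le)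
    obtain ⟨j, w, rfl, -⟩ := exists_tag_of_glued_pos hx₀v
    refine (ediam_mono ?_).trans ((hG j).cobounded w)
    rintro x ⟨-, hxv⟩
    rw [bumpGlued_apply_tag] at hxv
    exact hsupp x j w hxv
  · intro x hx
    obtain ⟨j, hxj⟩ := Set.mem_iUnion.1 hx
    obtain ⟨v, hv⟩ := (hG j).lebesgue x hxj
    refine ⟨tag j v, fun y hy hxy => ?_⟩
    have hyj : y ∈ thickening δ' (A j) :=
      mem_thickening_iff.2 ⟨x, hxj, by rw [dist_comm]; linarith⟩
    rw [bumpGlued_apply_tag]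
    exact mul_pos (bumpWeight_pos hyj (htot y hy)) (hv y hyj hxy)
  · obtain ⟨j, w, rfl, hpos⟩ := exists_tag_of_glued_pos hv
    obtain ⟨hxj, hw⟩ := hsupp x j w hpos
    exact Set.mem_iUnion.2 ⟨j, hloc j x hxj w hw⟩

lemma AdmitsPartition.of_unionOfFams {k : ℕ} {R δ δ' lam lam' L K : ℝ} {𝒱 : Set (Set X)}
    {U : Set X} (hU : UnionOfFams k R 𝒱 U) (hδ : δ < δ') (hL : L ≤ δ') (hL' : L ≤ R - 2 * δ')
    (hlam : 0 ≤ lam) (hsep : 2 ≤ lam * (R - 2 * δ')) (hlam' : lam + 2 * k / (δ' - δ) ≤ lam')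
    (h : ∀ W ∈ 𝒱, AdmitsPartition δ' lam L K W) : AdmitsPartition δ lam' L K U := by
  obtain ⟨𝒲, h𝒲, rfl⟩ := hU
  exact AdmitsPartition.iUnion hδ hL hlam hlam' fun j =>
    AdmitsPartition.sUnion (h𝒲 j).2 hlam hsep hL' fun W hW => h W ((h𝒲 j).1 hW)

end Partitions

/-- The thickening radius at level `i`. The gap `2 ^ (i + 2) n_i / ε` to level `i + 1` makes
the gluing at level `i` cost `ε / 2 ^ (i + 1)` in the Lipschitz constant. -/
noncomputable def levelScale (ε : ℝ) (n : ℕ → ℕ) : ℕ → ℝ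
  | 0 => 1 / ε
  | i + 1 => levelScale ε n i + 2 ^ (i + 2) * n i / ε

lemma one_div_le_levelScale {ε : ℝ} (hε : 0 < ε) (n : ℕ → ℕ) (i : ℕ) :
    1 / ε ≤ levelScale ε n i := by
  induction i with
  | zero => exact le_rfl
  | succ i ih =>
    rw [levelScale]
    have : 0 ≤ 2 ^ (i + 2) * (n i : ℝ) / ε := by positivity
    linarith

/-- The separation `4 / ε` left between thickenings of `R`-disjoint sets lets the jump of
`l¹`-distance at most `2` between them cost only `ε / 2`. -/
lemma admitsPartition_levelScale {X : Type*} [MetricSpace X] {ε K : ℝ} (hε : 0 < ε)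
    {n : ℕ → ℕ} {i : ℕ} (hn : 1 ≤ n i) {𝒱 : Set (Set X)} {U : Set X}
    (hU : UnionOfFams (n i) (2 * levelScale ε n (i + 1) + 4 / ε) 𝒱 U)
    (h : ∀ W ∈ 𝒱, AdmitsPartition (levelScale ε n (i + 1)) (ε / 2 + ε / 2 ^ (i + 1)) (1 / ε) K W) :
    AdmitsPartition (levelScale ε n i) (ε / 2 + ε / 2 ^ i) (1 / ε) K U := by
  have hn' : (1 : ℝ) ≤ n i := by exact_mod_cast hn
  have hgap : levelScale ε n (i + 1) - levelScale ε n i = 2 ^ (i + 2) * n i / ε := by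
    rw [levelScale]
    ring
  refine AdmitsPartition.of_unionOfFams hU ?_ (one_div_le_levelScale hε n _) ?_ (by positivity)
    ?_ ?_ h
  · rw [← sub_pos, hgap]
    positivity
  · rw [add_sub_cancel_left]
    exact div_le_div_of_nonneg_right (by norm_num) hε.le
  · rw [add_sub_cancel_left]
    calc (2 : ℝ) = ε / 2 * (4 / ε) := by field_simp; norm_num
      _ ≤ (ε / 2 + ε / 2 ^ (i + 1)) * (4 / ε) := by
          gcongr
          exact le_add_of_nonneg_right (by positivity)
  · refine le_of_eq ?_
    rw [hgap]
    field_simp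
    ring

/-- Corollary 7.7 / large scale paracompactness. Every metric space `X`
of countable asymptotic dimension is large scale paracompact: for every `ε > 0` and every
set `S` of cardinality bigger than `card(X × ℕ)` there is an `(ε,ε)`-Lipschitz partition of
unity `g : X → Δ(S)` that is cobounded and whose Lebesgue number is at least `1/ε`. -/
theorem stmt16 {X : Type u} [MetricSpace X] (hcad : CountableAsdim X) :
    ∀ ε > (0:ℝ), ∀ S : Type u, Cardinal.mk (X × ℕ) < Cardinal.mk S →
      ∃ g : X → S → ℝ, PartUnityOn g Set.univ ∧ LipschitzEpsOn ε g Set.univ ∧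
        (∃ K : ℝ, 0 < K ∧ CoboundedOn K g Set.univ) ∧
        ∀ x : X, ∃ v : S, Metric.ball x (1 / ε) ⊆ {y : X | 0 < g y v} := by
  intro ε hε S hS
  obtain ⟨n, hn, hasdim⟩ := hcad
  have hscale : ∀ i, 0 < levelScale ε n i := fun i =>
    (one_div_pos.2 hε).trans_le (one_div_le_levelScale hε n i)
  obtain ⟨𝒱, h𝒱, hdecomp, m, hm, M, hM, hbdd⟩ :=
    hasdim (fun i => 2 * levelScale ε n (i + 1) + 4 / ε) fun i =>
      add_pos (mul_pos two_pos (hscale _)) (by positivity)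
  have hlevel : ∀ U ∈ 𝒱 1, AdmitsPartition (levelScale ε n 1) (ε / 2 + ε / 2 ^ 1) (1 / ε)
      (M + 2 * levelScale ε n m) U :=
    Nat.decreasingInduction' (P := fun i => ∀ U ∈ 𝒱 i, AdmitsPartition (levelScale ε n i)
        (ε / 2 + ε / 2 ^ i) (1 / ε) (M + 2 * levelScale ε n m) U)
      (fun i _ hi ih U hU => admitsPartition_levelScale hε (hn i) (hdecomp i hi U hU) ih) hm
      fun U hU => admitsPartition_of_ediam_le (hscale m).le (by positivity) hM.le (hbdd U hU)
  obtain ⟨g, hg, -⟩ := hlevel Set.univ (h𝒱 ▸ rfl)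
  obtain ⟨ι⟩ := (Cardinal.le_def _ _).1 hS.le
  have huniv : thickening (levelScale ε n 1) (Set.univ : Set X) = Set.univ :=
    Set.eq_univ_of_forall fun x => self_subset_thickening (hscale 1) _ (Set.mem_univ x)
  have hgι := hg.embDomain ι
  have hε1 : ε / 2 + ε / 2 ^ 1 = ε := by ring
  refine ⟨fun x => ⇑((g x).embDomain ι), huniv ▸ hgι.partUnity, hε1 ▸ huniv ▸ hgι.lipschitz,
    ⟨_, by linarith [hscale m], huniv ▸ hgι.cobounded⟩, fun x => ?_⟩
  obtain ⟨v, hv⟩ := hgι.lebesgue x (Set.mem_univ x)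
  exact ⟨v, fun y hy => hv y (huniv.symm ▸ Set.mem_univ y) (by rwa [dist_comm, ← mem_ball])⟩
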